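/- arXiv:1810.01116 — 2 statements merged into one kernel-verified Lean document; each statement's English description precedes it below -/
import Mathlib

section
/- (Chi-squared property) For every σ > 0 and every z ≥ 0, ∫_{φ_σ⁻¹(−z)}^{φ_σ⁻¹(z)} f_IG(x|σ,σ) dx = ∫_{−z}^{z} φ(t) dt, where φ(t) = exp(−t²/2)/√(2π). Equivalently, if X is distributed with density f_IG(·|σ,σ), then the random variable φ_σ(X)² = σ²(X−1)²/X has the chi-squared distribution with one degree of freedom, i.e., the pushforward of the IG(σ,σ) measure under x ↦ σ²(x−1)²/x is the Gamma distribution with shape 1/2 and rate 1/2. -/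
open MeasureTheory Real Set

/-- Inverse Gaussian density `f_IG(x | γ, δ)`. -/
noncomputable def fIG (γ δ x : ℝ) : ℝ :=
  δ / Real.sqrt (2 * Real.pi * x ^ 3) * Real.exp (-(γ * x - δ) ^ 2 / (2 * x))

/-- The map `φ_σ(x) = σ (√x − 1/√x)`. -/
noncomputable def phiMap (σ x : ℝ) : ℝ := σ * (Real.sqrt x - 1 / Real.sqrt x)

/-- The inverse map `φ_σ⁻¹(z) = 1 + z²/(2σ²) + (z/σ)√(1 + z²/(4σ²))`. -/
noncomputable def phiInv (σ z : ℝ) : ℝ :=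
  1 + z ^ 2 / (2 * σ ^ 2) + z / σ * Real.sqrt (1 + z ^ 2 / (4 * σ ^ 2))

/-- Standard normal density `φ(z) = exp(−z²/2)/√(2π)`. -/
noncomputable def stdNormalPdf (z : ℝ) : ℝ := Real.exp (-z ^ 2 / 2) / Real.sqrt (2 * Real.pi)

/-- Standard normal cumulative distribution function. -/
noncomputable def stdNormalCDF (z : ℝ) : ℝ := ∫ t in Set.Iic z, stdNormalPdf t

/-- Modified Bessel function of the second kind `K_p(z)` (integral representation). -/
noncomputable def besselK (p z : ℝ) : ℝ :=
  (1 / 2) * ∫ t in Set.Ioi (0 : ℝ), t ^ (p - 1) * Real.exp (-z * (t + 1 / t) / 2)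

/-- Generalized inverse Gaussian density `f_GIG(x | γ, δ, p)`. -/
noncomputable def fGIG (γ δ p x : ℝ) : ℝ :=
  (γ / δ) ^ p * x ^ (p - 1) / (2 * besselK p (γ * δ)) *
    Real.exp (-(γ ^ 2 * x + δ ^ 2 / x) / 2)

/-- Generalized hyperbolic density `f_GH(y | μ, β, γ, δ, p)` with `α = √(β² + γ²)`. -/
noncomputable def fGH (μ β γ δ p y : ℝ) : ℝ :=
  Real.sqrt (Real.sqrt (β ^ 2 + γ ^ 2)) *
      (γ / (Real.sqrt (β ^ 2 + γ ^ 2) * δ)) ^ p /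
      (Real.sqrt (2 * Real.pi) * besselK p (δ * γ)) *
    Real.exp (β * (y - μ)) *
    besselK (p - 1 / 2) (Real.sqrt (β ^ 2 + γ ^ 2) * Real.sqrt (δ ^ 2 + (y - μ) ^ 2)) /
    (δ ^ 2 + (y - μ) ^ 2) ^ ((1 - 2 * p) / 4)

/-!
For `γ = δ = σ` the exponent of `f_IG(x)` is `-φ_σ(x)²/2`, and `φ_σ(1/x) = -φ_σ(x)`;
moreover `φ_σ⁻¹(-z) = 1/φ_σ⁻¹(z)`. Folding `[1/x₊, x₊]` at `1` by `x ↦ 1/x` turns the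
integral into `∫₁^{x₊} (f_IG(x) + x⁻² f_IG(1/x)) dx`, and this integrand is exactly
`2 φ(φ_σ(x)) φ_σ'(x)`. Substituting `t = φ_σ(x)` gives `2 ∫₀^z φ = ∫_{-z}^z φ`.
-/

section IntervalIntegral

variable {E : Type*} [NormedAddCommGroup E] [NormedSpace ℝ E]

open intervalIntegral

theorem integral_inv_inv_eq_integral_comp_inv {f : ℝ → E} (hf : ContinuousOn f (Ioi 0))
    {a b : ℝ} (ha : 0 < a) (hb : 0 < b) :
    ∫ x in a⁻¹..b⁻¹, f x = ∫ u in b..a, (u ^ 2)⁻¹ • f u⁻¹ := by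
  have hpos : uIcc a b ⊆ Ioi 0 := fun u hu ↦ (lt_min ha hb).trans_le hu.1
  have hderiv : ∀ u ∈ uIcc a b, HasDerivAt (·⁻¹) (-(u ^ 2)⁻¹) u :=
    fun u hu ↦ hasDerivAt_inv (hpos hu).ne'
  have hderiv_cont : ContinuousOn (fun u : ℝ ↦ -(u ^ 2)⁻¹) (uIcc a b) :=
    fun u hu ↦
      ((continuousAt_id.pow 2).inv₀ (pow_ne_zero 2 (hpos hu).ne')).neg.continuousWithinAt
  have hf_image : ContinuousOn f ((·⁻¹) '' uIcc a b) :=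
    hf.mono (by rintro _ ⟨u, hu, rfl⟩; exact inv_pos.2 <| mem_Ioi.1 (hpos hu))
  rw [← integral_deriv_smul_comp' hderiv hderiv_cont hf_image, integral_symm,
    ← intervalIntegral.integral_neg]
  simp only [Function.comp_apply, neg_smul, neg_neg]

theorem integral_inv_to_self_eq_integral_one_to {f : ℝ → E} (hf : ContinuousOn f (Ioi 0))
    {a : ℝ} (ha : 0 < a) :
    ∫ x in a⁻¹..a, f x = ∫ u in 1..a, (f u + (u ^ 2)⁻¹ • f u⁻¹) := by
  have hpos : ∀ b : ℝ, 0 < b → uIcc b 1 ⊆ Ioi 0 :=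
    fun b hb u hu ↦ (lt_min hb one_pos).trans_le hu.1
  have hint : ∀ b : ℝ, 0 < b → IntervalIntegrable f volume b 1 :=
    fun b hb ↦ (hf.mono (hpos b hb)).intervalIntegrable
  have hint_inv : IntervalIntegrable (fun u : ℝ ↦ (u ^ 2)⁻¹ • f u⁻¹) volume 1 a := by
    refine ContinuousOn.intervalIntegrable fun u hu ↦ ?_
    have hu : 0 < u := hpos a ha (uIcc_comm 1 a ▸ hu)
    exact ((continuousAt_id.pow 2).inv₀ (pow_ne_zero 2 hu.ne')).continuousWithinAt.smul
      ((hf.continuousAt (Ioi_mem_nhds (inv_pos.mpr hu))).comp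
        (continuousAt_inv₀ hu.ne')).continuousWithinAt
  rw [← integral_add_adjacent_intervals (hint _ (inv_pos.mpr ha)) (hint a ha).symm,
    ← inv_one, integral_inv_inv_eq_integral_comp_inv hf ha one_pos, inv_one, add_comm,
    integral_add (hint a ha).symm hint_inv]

theorem integral_neg_to_self_of_even {f : ℝ → E} (hf : ∀ t, f (-t) = f t) {z : ℝ}
    (hint : IntervalIntegrable f volume 0 z) :
    ∫ t in (-z)..z, f t = (2 : ℝ) • ∫ t in 0..z, f t := by
  have hint_neg : IntervalIntegrable f volume (-z) 0 := by
    simpa [hf] using ((IntervalIntegrable.iff_comp_neg (f := f)).mp hint).symm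
  have hneg : ∫ t in (-z)..0, f t = ∫ t in 0..z, f t := by
    simpa [hf] using (integral_comp_neg (a := 0) (b := z) (f := f)).symm
  rw [← integral_add_adjacent_intervals hint_neg hint, hneg, two_smul]

end IntervalIntegral

noncomputable def phiInvSqrt (σ t : ℝ) : ℝ := t / (2 * σ) + √(1 + t ^ 2 / (4 * σ ^ 2))

lemma phiInvSqrt_pos (σ t : ℝ) : 0 < phiInvSqrt σ t := by
  have h : |t / (2 * σ)| < √(1 + t ^ 2 / (4 * σ ^ 2)) := by
    rw [Real.lt_sqrt (abs_nonneg _), sq_abs, div_pow, mul_pow]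
    norm_num
  unfold phiInvSqrt
  linarith [neg_abs_le (t / (2 * σ))]

lemma phiInvSqrt_neg_mul (σ t : ℝ) : phiInvSqrt σ (-t) * phiInvSqrt σ t = 1 := by
  unfold phiInvSqrt
  rw [neg_sq]
  linear_combination Real.sq_sqrt (by positivity : 0 ≤ 1 + t ^ 2 / (4 * σ ^ 2))

lemma phiInv_eq_sq (σ t : ℝ) : phiInv σ t = phiInvSqrt σ t ^ 2 := by
  unfold phiInv phiInvSqrt
  linear_combination -Real.sq_sqrt (by positivity : 0 ≤ 1 + t ^ 2 / (4 * σ ^ 2))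

lemma phiInv_pos (σ t : ℝ) : 0 < phiInv σ t := by
  rw [phiInv_eq_sq]
  exact pow_pos (phiInvSqrt_pos σ t) 2

lemma phiInv_neg (σ t : ℝ) : phiInv σ (-t) = (phiInv σ t)⁻¹ := by
  rw [phiInv_eq_sq, phiInv_eq_sq, ← inv_pow, eq_inv_of_mul_eq_one_left (phiInvSqrt_neg_mul σ t)]

lemma phiMap_phiInv {σ : ℝ} (hσ : σ ≠ 0) (t : ℝ) : phiMap σ (phiInv σ t) = t := by
  have hinv : 1 / phiInvSqrt σ t = phiInvSqrt σ (-t) := by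
    rw [one_div, eq_inv_of_mul_eq_one_left (phiInvSqrt_neg_mul σ t)]
  rw [phiMap, phiInv_eq_sq, Real.sqrt_sq (phiInvSqrt_pos σ t).le, hinv, phiInvSqrt, phiInvSqrt]
  field_simp
  ring

lemma phiMap_one (σ : ℝ) : phiMap σ 1 = 0 := by simp [phiMap]

lemma phiMap_inv (σ x : ℝ) : phiMap σ x⁻¹ = -phiMap σ x := by
  simp only [phiMap, Real.sqrt_inv, one_div, inv_inv]
  ring

lemma stdNormalPdf_neg (t : ℝ) : stdNormalPdf (-t) = stdNormalPdf t := by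
  simp [stdNormalPdf]

lemma continuous_stdNormalPdf : Continuous stdNormalPdf := by
  unfold stdNormalPdf; fun_prop

lemma continuousOn_fIG (γ δ : ℝ) : ContinuousOn (fIG γ δ) (Ioi 0) := by
  intro x (hx : 0 < x)
  have : √(2 * π * x ^ 3) ≠ 0 := by positivity
  unfold fIG
  fun_prop (disch := positivity)

lemma hasDerivAt_phiMap (σ : ℝ) {x : ℝ} (hx : 0 < x) :
    HasDerivAt (phiMap σ) (σ * (x + 1) / (2 * x * √x)) x := by
  have hr : √x ≠ 0 := (Real.sqrt_pos.mpr hx).ne'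
  have hsqrt := Real.hasDerivAt_sqrt hx.ne'
  refine ((hsqrt.sub ((hasDerivAt_const x (1 : ℝ)).div hsqrt hr)).const_mul σ).congr_deriv ?_
  field_simp
  rw [Real.sq_sqrt hx.le]
  ring

lemma continuousOn_deriv_phiMap (σ : ℝ) :
    ContinuousOn (fun x ↦ σ * (x + 1) / (2 * x * √x)) (Ioi 0) := by
  intro x (hx : 0 < x)
  have : 2 * x * √x ≠ 0 := by positivity
  fun_prop (disch := assumption)

lemma fIG_self_eq_mul_stdNormalPdf (σ : ℝ) {x : ℝ} (hx : 0 < x) :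
    fIG σ σ x = σ / (x * √x) * stdNormalPdf (phiMap σ x) := by
  have hr : 0 < √x := Real.sqrt_pos.mpr hx
  have hx_sq : √x ^ 2 = x := Real.sq_sqrt hx.le
  have hnorm : √(2 * π * x ^ 3) = √(2 * π) * (x * √x) := by
    rw [show 2 * π * x ^ 3 = 2 * π * (x * √x) ^ 2 by rw [mul_pow, hx_sq]; ring,
      Real.sqrt_mul (by positivity), Real.sqrt_sq (by positivity)]
  have hexp : -(σ * x - σ) ^ 2 / (2 * x) = -phiMap σ x ^ 2 / 2 := by
    rw [phiMap]
    field_simp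
    rw [hx_sq]
    ring
  rw [fIG, stdNormalPdf, hnorm, hexp]
  ring

lemma fIG_add_inv_sq_mul_fIG_inv (σ : ℝ) {x : ℝ} (hx : 0 < x) :
    fIG σ σ x + (x ^ 2)⁻¹ * fIG σ σ x⁻¹
      = 2 * stdNormalPdf (phiMap σ x) * (σ * (x + 1) / (2 * x * √x)) := by
  have hr : 0 < √x := Real.sqrt_pos.mpr hx
  rw [fIG_self_eq_mul_stdNormalPdf σ hx, fIG_self_eq_mul_stdNormalPdf σ (inv_pos.mpr hx),
    phiMap_inv, stdNormalPdf_neg, Real.sqrt_inv]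
  field_simp
  rw [Real.sq_sqrt hx.le]
  ring

theorem ig_chi_squared_general (σ : ℝ) (hσ : 0 < σ) (z : ℝ) :
    ∫ x in (phiInv σ (-z))..(phiInv σ z), fIG σ σ x = ∫ t in (-z)..z, stdNormalPdf t := by
  have hpos : uIcc 1 (phiInv σ z) ⊆ Ioi 0 :=
    fun u hu ↦ (lt_min one_pos (phiInv_pos σ z)).trans_le hu.1
  have hphiMap : ∀ u ∈ uIcc 1 (phiInv σ z),
      HasDerivAt (phiMap σ) (σ * (u + 1) / (2 * u * √u)) u :=
    fun u hu ↦ hasDerivAt_phiMap σ (hpos hu)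
  calc ∫ x in (phiInv σ (-z))..(phiInv σ z), fIG σ σ x
      = ∫ u in 1..phiInv σ z, (fIG σ σ u + (u ^ 2)⁻¹ * fIG σ σ u⁻¹) := by
        rw [phiInv_neg]
        exact integral_inv_to_self_eq_integral_one_to (continuousOn_fIG σ σ) (phiInv_pos σ z)
    _ = ∫ u in 1..phiInv σ z,
          ((2 * stdNormalPdf ·) ∘ phiMap σ) u * (σ * (u + 1) / (2 * u * √u)) :=
        intervalIntegral.integral_congr fun u hu ↦ fIG_add_inv_sq_mul_fIG_inv σ (hpos hu)
    _ = ∫ t in 0..z, 2 * stdNormalPdf t := by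
        rw [intervalIntegral.integral_comp_mul_deriv hphiMap
          ((continuousOn_deriv_phiMap σ).mono hpos) (continuous_stdNormalPdf.const_mul 2),
          phiMap_one, phiMap_phiInv hσ.ne']
    _ = ∫ t in (-z)..z, stdNormalPdf t := by
        rw [integral_neg_to_self_of_even stdNormalPdf_neg
          (continuous_stdNormalPdf.intervalIntegrable 0 z), intervalIntegral.integral_const_mul,
          smul_eq_mul]

/-- chi-squared property: for `z ≥ 0`,
`∫_{φ_σ⁻¹(−z)}^{φ_σ⁻¹(z)} f_IG(x|σ,σ) dx = ∫_{−z}^{z} φ(t) dt`. -/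
theorem ig_chi_squared (σ : ℝ) (hσ : 0 < σ) (z : ℝ) (hz : 0 ≤ z) :
    ∫ x in (phiInv σ (-z))..(phiInv σ z), fIG σ σ x = ∫ t in (-z)..z, stdNormalPdf t :=
  ig_chi_squared_general σ hσ z
end

section
/- (GH moment generating function) For all μ ∈ ℝ, β ∈ ℝ, γ, δ > 0, p ∈ ℝ, and every real t such that s := βt + t²/2 < γ²/2, one has ∫_ℝ e^{ty} · f_GH(y|μ,β,γ,δ,p) dy = e^{μt} · (γ²/(γ² − 2s))^{p/2} · K_p(δ·√(γ² − 2s)) / K_p(δγ); that is, the moment generating function of the GH distribution equals e^{μt} times the moment generating function of the GIG mixing distribution evaluated at βt + t²/2. -/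
/-!
The generalized hyperbolic law is the normal variance-mean mixture `Y = μ + β X + √X Z` with
`X ~ GIG(γ, δ, p)`: integrating the Gaussian kernel against `f_GIG` and evaluating the resulting
integral `∫ x^{q-1} e^{-(a x + b / x)/2} dx = 2 (b/a)^{q/2} K_q(√(ab))` gives `f_GH`.
By Tonelli, `E[e^{tY}] = E[E[e^{tY} | X]] = e^{μt} E[e^{sX}]` with `s = βt + t²/2`, and the same
Bessel integral evaluates the GIG moment generating function at `s` whenever `s < γ²/2`.
-/

open MeasureTheory Real Set

open ProbabilityTheory
open scoped Nat NNReal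

lemma exp_neg_le_factorial_div_pow {u : ℝ} (hu : 0 < u) (n : ℕ) : exp (-u) ≤ n ! / u ^ n := by
  rw [exp_neg, le_div_iff₀ (by positivity), inv_mul_le_iff₀ (exp_pos u)]
  have := Real.pow_div_factorial_le_exp u hu.le n
  rw [div_le_iff₀ (by positivity)] at this
  linarith

lemma integrableOn_rpow_mul_exp_neg_add_div (q : ℝ) {a b : ℝ} (ha : 0 < a) (hb : 0 < b) :
    IntegrableOn (fun x : ℝ ↦ x ^ (q - 1) * exp (-(a * x + b / x) / 2)) (Ioi 0) := by
  -- `e^{-b/(2x)} ≤ n! (2x/b)^n` tames the singularity at `0` once `q - 1 + n > -1`.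
  obtain ⟨n, hn⟩ := exists_nat_gt (-q)
  have hdom : IntegrableOn
      (fun x : ℝ ↦ n ! * (2 / b) ^ n * (x ^ (q - 1 + n) * exp (-(a / 2) * x ^ (1 : ℝ)))) (Ioi 0) :=
    (integrableOn_rpow_mul_exp_neg_mul_rpow (by linarith) one_pos (by positivity)).const_mul _
  refine hdom.mono' (by fun_prop)
    ((ae_restrict_iff' measurableSet_Ioi).2 (.of_forall fun x (hx : 0 < x) ↦ ?_))
  have hsplit : exp (-(a * x + b / x) / 2) = exp (-(a / 2) * x) * exp (-(b / x / 2)) := by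
    rw [← exp_add]; ring_nf
  have hbound := exp_neg_le_factorial_div_pow (show 0 < b / x / 2 by positivity) n
  rw [norm_of_nonneg (by positivity), hsplit, rpow_one, rpow_add hx, rpow_natCast]
  calc x ^ (q - 1) * (exp (-(a / 2) * x) * exp (-(b / x / 2)))
      ≤ x ^ (q - 1) * (exp (-(a / 2) * x) * (n ! / (b / x / 2) ^ n)) := by gcongr
    _ = n ! * (2 / b) ^ n * (x ^ (q - 1) * x ^ n * exp (-(a / 2) * x)) := by
      field_simp
      rw [← mul_pow, ← mul_pow, show b / (2 * x) * (2 / b) * x = 1 by field_simp, one_pow]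

lemma integrableOn_besselK_integrand (q : ℝ) {z : ℝ} (hz : 0 < z) :
    IntegrableOn (fun t : ℝ ↦ t ^ (q - 1) * exp (-z * (t + 1 / t) / 2)) (Ioi 0) := by
  simpa only [show ∀ t, -z * (t + 1 / t) / 2 = -(z * t + z / t) / 2 by intro t; ring]
    using integrableOn_rpow_mul_exp_neg_add_div q hz hz

lemma besselK_pos (q : ℝ) {z : ℝ} (hz : 0 < z) : 0 < besselK q z := by
  have hpos : ∀ t ∈ Ioi (0 : ℝ), 0 < t ^ (q - 1) * exp (-z * (t + 1 / t) / 2) :=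
    fun t ht ↦ mul_pos (rpow_pos_of_pos ht _) (exp_pos _)
  have hsupp : Ioi 0 ⊆ Function.support fun t : ℝ ↦ t ^ (q - 1) * exp (-z * (t + 1 / t) / 2) :=
    fun t ht ↦ (hpos t ht).ne'
  have hint : 0 < ∫ t in Ioi (0 : ℝ), t ^ (q - 1) * exp (-z * (t + 1 / t) / 2) := by
    rw [setIntegral_pos_iff_support_of_nonneg_ae
      ((ae_restrict_iff' measurableSet_Ioi).2 (.of_forall fun t ht ↦ (hpos t ht).le))
      (integrableOn_besselK_integrand q hz), inter_eq_right.2 hsupp]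
    simp
  rw [besselK]
  positivity

lemma integral_rpow_mul_exp_neg_add_div (q : ℝ) {a b : ℝ} (ha : 0 < a) (hb : 0 < b) :
    ∫ x in Ioi 0, x ^ (q - 1) * exp (-(a * x + b / x) / 2) =
      2 * √(b / a) ^ q * besselK q √(a * b) := by
  -- substitute `x = c t` with `c = √(b/a)`, so that `a c = b / c = √(ab)`
  set c := √(b / a)
  set z := √(a * b)
  have hc : 0 < c := sqrt_pos.2 (by positivity)
  have hac : a * c = z := by
    rw [← sqrt_sq ha.le, ← sqrt_mul (sq_nonneg a)]; congr 1; field_simp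
  have hbc : b / c = z := by
    rw [← sqrt_sq hb.le, ← sqrt_div (sq_nonneg b)]; congr 1; field_simp
  have hsubst : ∀ t ∈ Ioi (0 : ℝ), (c * t) ^ (q - 1) * exp (-(a * (c * t) + b / (c * t)) / 2) =
      c ^ (q - 1) * (t ^ (q - 1) * exp (-z * (t + 1 / t) / 2)) := by
    intro t (ht : 0 < t)
    rw [mul_rpow hc.le ht.le, show a * (c * t) = z * t by rw [← hac]; ring,
      show b / (c * t) = z / t by rw [← hbc]; field_simp]
    ring_nf
  calc ∫ x in Ioi 0, x ^ (q - 1) * exp (-(a * x + b / x) / 2)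
      = c * ∫ t in Ioi 0, (c * t) ^ (q - 1) * exp (-(a * (c * t) + b / (c * t)) / 2) := by
        rw [integral_comp_mul_left_Ioi (fun x ↦ x ^ (q - 1) * exp (-(a * x + b / x) / 2)) 0 hc,
          mul_zero, smul_eq_mul, mul_inv_cancel_left₀ hc.ne']
    _ = c * ∫ t in Ioi 0, c ^ (q - 1) * (t ^ (q - 1) * exp (-z * (t + 1 / t) / 2)) := by
        rw [setIntegral_congr_fun measurableSet_Ioi hsubst]
    _ = 2 * c ^ q * besselK q z := by
        rw [integral_const_mul, besselK, ← mul_assoc, mul_comm c, rpow_sub_one hc.ne',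
          div_mul_cancel₀ _ hc.ne']
        ring

lemma integral_exp_mul_gaussianPDFReal (m : ℝ) {v : ℝ≥0} (hv : v ≠ 0) (t : ℝ) :
    ∫ y, exp (t * y) * gaussianPDFReal m v y = exp (m * t + v * t ^ 2 / 2) := by
  rw [← congrFun mgf_id_gaussianReal t, mgf, integral_gaussianReal_eq_integral_smul hv]
  simp only [id, smul_eq_mul, mul_comm]

lemma integrable_exp_mul_gaussianPDFReal (m : ℝ) {v : ℝ≥0} (hv : v ≠ 0) (t : ℝ) :
    Integrable fun y ↦ exp (t * y) * gaussianPDFReal m v y :=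
  .of_integral_ne_zero (by rw [integral_exp_mul_gaussianPDFReal m hv]; positivity)

lemma fGIG_nonneg {γ δ x : ℝ} (p : ℝ) (hγ : 0 < γ) (hδ : 0 < δ) (hx : 0 ≤ x) :
    0 ≤ fGIG γ δ p x := by
  have := besselK_pos p (mul_pos hγ hδ)
  unfold fGIG
  positivity

lemma exp_mul_mul_fGIG (γ δ p s x : ℝ) :
    exp (s * x) * fGIG γ δ p x = (γ / δ) ^ p / (2 * besselK p (γ * δ)) *
      (x ^ (p - 1) * exp (-((γ ^ 2 - 2 * s) * x + δ ^ 2 / x) / 2)) := by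
  rw [fGIG, mul_left_comm, ← exp_add]
  ring_nf

lemma integrableOn_exp_mul_fGIG {γ δ s : ℝ} (p : ℝ) (hδ : δ ≠ 0) (hs : s < γ ^ 2 / 2) :
    IntegrableOn (fun x ↦ exp (s * x) * fGIG γ δ p x) (Ioi 0) := by
  simp only [exp_mul_mul_fGIG]
  exact (integrableOn_rpow_mul_exp_neg_add_div p (by linarith) (by positivity)).const_mul _

lemma integral_exp_mul_fGIG {γ δ s : ℝ} (p : ℝ) (hγ : 0 < γ) (hδ : 0 < δ) (hs : s < γ ^ 2 / 2) :
    ∫ x in Ioi 0, exp (s * x) * fGIG γ δ p x =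
      (γ ^ 2 / (γ ^ 2 - 2 * s)) ^ (p / 2) * besselK p (δ * √(γ ^ 2 - 2 * s)) /
        besselK p (γ * δ) := by
  set A := γ ^ 2 - 2 * s
  have hA : 0 < A := by linarith
  have hsA : 0 < √A := sqrt_pos.2 hA
  simp only [exp_mul_mul_fGIG]
  rw [integral_const_mul, integral_rpow_mul_exp_neg_add_div p hA (by positivity),
    sqrt_div (sq_nonneg δ), sqrt_mul hA.le, sqrt_sq hδ.le,
    show γ ^ 2 / A = (γ / √A) ^ (2 : ℝ) by rw [rpow_two, div_pow, sq_sqrt hA.le],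
    ← rpow_mul (by positivity), mul_div_cancel₀ p two_ne_zero,
    show γ / √A = γ / δ * (δ / √A) by field_simp, mul_rpow (by positivity) (by positivity)]
  field_simp

lemma gaussianPDFReal_mul_fGIG (μ β γ δ p y : ℝ) {x : ℝ} (hx : 0 < x) :
    gaussianPDFReal (μ + β * x) x.toNNReal y * fGIG γ δ p x =
      (γ / δ) ^ p * exp (β * (y - μ)) / (2 * besselK p (γ * δ) * √(2 * π)) *
        (x ^ (p - 1 / 2 - 1) * exp (-((β ^ 2 + γ ^ 2) * x + (δ ^ 2 + (y - μ) ^ 2) / x) / 2)) := by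
  have hexp : exp (-(y - (μ + β * x)) ^ 2 / (2 * x)) * exp (-(γ ^ 2 * x + δ ^ 2 / x) / 2) =
      exp (β * (y - μ)) * exp (-((β ^ 2 + γ ^ 2) * x + (δ ^ 2 + (y - μ) ^ 2) / x) / 2) := by
    rw [← exp_add, ← exp_add]
    congr 1
    field_simp
    ring
  have hpow : x ^ (p - 1) = x ^ (p - 1 / 2 - 1) * √x := by
    rw [sqrt_eq_rpow, ← rpow_add hx]
    ring_nf
  have hsx : 0 < √x := sqrt_pos.2 hx
  rw [gaussianPDFReal, fGIG, Real.coe_toNNReal _ hx.le, sqrt_mul (by positivity) x, hpow]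
  calc _ = (γ / δ) ^ p / (2 * besselK p (γ * δ) * √(2 * π)) * x ^ (p - 1 / 2 - 1) * (√x / √x) *
        (exp (-(y - (μ + β * x)) ^ 2 / (2 * x)) * exp (-(γ ^ 2 * x + δ ^ 2 / x) / 2)) := by ring
    _ = _ := by rw [div_self hsx.ne', hexp]; ring

lemma fGH_eq_integral_gaussianPDFReal_mul_fGIG (μ β p y : ℝ) {γ δ : ℝ} (hγ : 0 < γ) (hδ : 0 < δ) :
    fGH μ β γ δ p y = ∫ x in Ioi 0, gaussianPDFReal (μ + β * x) x.toNNReal y * fGIG γ δ p x := by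
  rw [fGH, mul_comm δ γ]
  set α := √(β ^ 2 + γ ^ 2) with hα_def
  set D := δ ^ 2 + (y - μ) ^ 2
  have hA : 0 < β ^ 2 + γ ^ 2 := by positivity
  have hα : 0 < α := sqrt_pos.2 hA
  have hD : 0 < D := by positivity
  have hK : 0 < besselK p (γ * δ) := besselK_pos p (by positivity)
  rw [setIntegral_congr_fun measurableSet_Ioi fun x hx ↦ gaussianPDFReal_mul_fGIG μ β γ δ p y hx,
    integral_const_mul, integral_rpow_mul_exp_neg_add_div _ hA hD, sqrt_mul hA.le, sqrt_div hD.le,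
    ← hα_def]
  have e1 : (√D / α) ^ (p - 1 / 2) = D ^ ((2 * p - 1) / 4) / α ^ (p - 1 / 2) := by
    rw [div_rpow (sqrt_nonneg D) hα.le, sqrt_eq_rpow, ← rpow_mul hD.le]
    ring_nf
  have e2 : (γ / (α * δ)) ^ p = (γ / δ) ^ p / α ^ p := by
    rw [mul_comm α δ, ← div_div, div_rpow (by positivity) hα.le]
  have e3 : α ^ (p - 1 / 2) = α ^ p / √α := by rw [rpow_sub hα, sqrt_eq_rpow]
  have e4 : D ^ ((1 - 2 * p) / 4) = (D ^ ((2 * p - 1) / 4))⁻¹ := by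
    rw [← rpow_neg hD.le]
    ring_nf
  have hαp : 0 < α ^ p := rpow_pos_of_pos hα p
  have hsα : 0 < √α := sqrt_pos.2 hα
  have hDq : 0 < D ^ ((2 * p - 1) / 4) := rpow_pos_of_pos hD _
  rw [e1, e2, e3, e4]
  field_simp

lemma integrable_prod_of_nonneg {X Y : Type*} [MeasurableSpace X] [MeasurableSpace Y]
    {μ : Measure X} {ν : Measure Y} [SFinite ν] {f : X × Y → ℝ}
    (hf : AEStronglyMeasurable f (μ.prod ν)) (hf₀ : ∀ᵐ x ∂μ, ∀ y, 0 ≤ f (x, y))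
    (hsec : ∀ᵐ x ∂μ, Integrable (fun y ↦ f (x, y)) ν)
    (hint : Integrable (fun x ↦ ∫ y, f (x, y) ∂ν) μ) : Integrable f (μ.prod ν) := by
  refine (integrable_prod_iff hf).2 ⟨hsec, hint.congr ?_⟩
  filter_upwards [hf₀] with x hx
  simp only [norm_of_nonneg (hx _)]

lemma integral_exp_mul_gaussianPDFReal_mul_fGIG (μ β γ δ p t : ℝ) {x : ℝ} (hx : 0 < x) :
    ∫ y, exp (t * y) * gaussianPDFReal (μ + β * x) x.toNNReal y * fGIG γ δ p x =
      exp (μ * t) * (exp ((β * t + t ^ 2 / 2) * x) * fGIG γ δ p x) := by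
  rw [integral_mul_const, integral_exp_mul_gaussianPDFReal _ (Real.toNNReal_pos.2 hx).ne',
    Real.coe_toNNReal _ hx.le, ← mul_assoc, ← exp_add]
  ring_nf

lemma integrable_exp_mul_gaussianPDFReal_mul_fGIG (μ β p t : ℝ) {γ δ : ℝ} (hγ : 0 < γ)
    (hδ : 0 < δ) (ht : β * t + t ^ 2 / 2 < γ ^ 2 / 2) :
    Integrable (fun z : ℝ × ℝ ↦
        exp (t * z.2) * gaussianPDFReal (μ + β * z.1) z.1.toNNReal z.2 * fGIG γ δ p z.1)
      ((volume.restrict (Ioi 0)).prod volume) := by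
  refine integrable_prod_of_nonneg ?_ ?_ ?_ ?_
  · refine Measurable.aestronglyMeasurable ?_
    unfold fGIG
    fun_prop
  · exact (ae_restrict_iff' measurableSet_Ioi).2 (.of_forall fun x hx y ↦
      mul_nonneg (mul_nonneg (exp_pos _).le (gaussianPDFReal_nonneg _ _ _))
        (fGIG_nonneg p hγ hδ (le_of_lt hx)))
  · exact (ae_restrict_iff' measurableSet_Ioi).2 (.of_forall fun x (hx : 0 < x) ↦
      (integrable_exp_mul_gaussianPDFReal (μ + β * x) (Real.toNNReal_pos.2 hx).ne' t).mul_const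
        (fGIG γ δ p x))
  · exact IntegrableOn.congr_fun ((integrableOn_exp_mul_fGIG p hδ.ne' ht).const_mul _)
      (fun x hx ↦ (integral_exp_mul_gaussianPDFReal_mul_fGIG μ β γ δ p t hx).symm)
      measurableSet_Ioi

/-- GH moment generating function: for `s = βt + t²/2 < γ²/2`,
`∫_ℝ e^{ty} f_GH(y|μ,β,γ,δ,p) dy = e^{μt} (γ²/(γ²−2s))^{p/2} K_p(δ√(γ²−2s))/K_p(δγ)`. -/
theorem gh_mgf (μ β γ δ p t : ℝ) (hγ : 0 < γ) (hδ : 0 < δ)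
    (ht : β * t + t ^ 2 / 2 < γ ^ 2 / 2) :
    ∫ y, Real.exp (t * y) * fGH μ β γ δ p y =
      Real.exp (μ * t) *
        (γ ^ 2 / (γ ^ 2 - 2 * (β * t + t ^ 2 / 2))) ^ (p / 2) *
        besselK p (δ * Real.sqrt (γ ^ 2 - 2 * (β * t + t ^ 2 / 2))) /
        besselK p (δ * γ) := by
  calc ∫ y, exp (t * y) * fGH μ β γ δ p y
      = ∫ y, ∫ x in Ioi 0,
          exp (t * y) * gaussianPDFReal (μ + β * x) x.toNNReal y * fGIG γ δ p x := by
        simp only [fGH_eq_integral_gaussianPDFReal_mul_fGIG μ β p _ hγ hδ, ← integral_const_mul,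
          mul_assoc]
    _ = ∫ x in Ioi 0, ∫ y,
          exp (t * y) * gaussianPDFReal (μ + β * x) x.toNNReal y * fGIG γ δ p x :=
        (integral_integral_swap (integrable_exp_mul_gaussianPDFReal_mul_fGIG μ β p t hγ hδ ht)).symm
    _ = ∫ x in Ioi 0, exp (μ * t) * (exp ((β * t + t ^ 2 / 2) * x) * fGIG γ δ p x) :=
        setIntegral_congr_fun measurableSet_Ioi fun x hx ↦
          integral_exp_mul_gaussianPDFReal_mul_fGIG μ β γ δ p t hx
    _ = _ := by
        rw [integral_const_mul, integral_exp_mul_fGIG p hγ hδ ht, mul_comm γ δ]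
        ring
end
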